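/- The simple five (five aligned consecutive PX stones) is the unique minimal PX victory of 0 steps. -/

import Mathlib

/- # A formal model of Gomoku patterns and restricted games -/

abbrev Square := ℤ × ℤ

inductive Cell
  | px | py | empty
deriving DecidableEq

/-- A pattern: a finite set of board squares together with their contents. -/
structure Pattern where
  dom : Finset Square
  val : Square → Cell

def Pattern.emptySquares (p : Pattern) : Finset Square :=
  p.dom.filter (fun s => p.val s = Cell.empty)

/-- Fill (or empty) a square of the pattern with the given content. -/
def Pattern.fill (p : Pattern) (s : Square) (c : Cell) : Pattern :=
  ⟨p.dom, fun t => if t = s then c else p.val t⟩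

/-- Remove a square from the pattern. -/
def Pattern.erase (p : Pattern) (s : Square) : Pattern :=
  ⟨p.dom.erase s, p.val⟩

/-- A PX pattern contains no PY stones. -/
def Pattern.isPX (p : Pattern) : Prop :=
  ∀ s ∈ p.dom, p.val s ≠ Cell.py

/-- The four alignment directions. -/
def dirs : List Square := [(1, 0), (0, 1), (1, 1), (1, -1)]

def shift (s d : Square) (i : ℕ) : Square :=
  (s.1 + (i : ℤ) * d.1, s.2 + (i : ℤ) * d.2)

/-- A block: five aligned consecutive squares starting at `s` in direction `d`. -/
def blockSquares (s d : Square) : Finset Square :=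
  (Finset.range 5).image (fun i => shift s d i)

/-- A line: nine aligned consecutive squares. -/
def lineSquares (s d : Square) : Finset Square :=
  (Finset.range 9).image (fun i => shift s d i)

def lineCenter (s d : Square) : Square := shift s d 4

/-- Five aligned consecutive stones of colour `c` inside the pattern. -/
def hasFive (p : Pattern) (c : Cell) : Prop :=
  ∃ s d, d ∈ dirs ∧ blockSquares s d ⊆ p.dom ∧ ∀ t ∈ blockSquares s d, p.val t = c

/-- `winsIn b n p`: in the game restricted to `p`, with PX to move iff `b`,
PX (playing optimally) forces a five-in-a-row within `n` further plies,
against any play of PY. -/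
def winsIn : Bool → ℕ → Pattern → Prop
  | _, 0, p => hasFive p Cell.px
  | true, n + 1, p =>
      hasFive p Cell.px ∨ (¬ hasFive p Cell.py ∧
        ∃ s ∈ p.emptySquares, winsIn false n (p.fill s Cell.px))
  | false, n + 1, p =>
      hasFive p Cell.px ∨ (¬ hasFive p Cell.py ∧ p.emptySquares.Nonempty ∧
        ∀ s ∈ p.emptySquares, winsIn true n (p.fill s Cell.py))

/-- PX wins the restricted game moving first. -/
def pxWinsFirst (p : Pattern) : Prop := ∃ n, winsIn true n p

/-- PX wins the restricted game moving second. -/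
def pxWinsSecond (p : Pattern) : Prop := ∃ n, winsIn false n p

/-- A PX victory: a PX pattern where PX wins moving first or second. -/
def isVictory (p : Pattern) : Prop := p.isPX ∧ pxWinsFirst p ∧ pxWinsSecond p

/-- A victory of `n` steps: PX, moving second, wins placing `n` stones
(i.e. within `2*n` plies) and no fewer. -/
def victorySteps (p : Pattern) (n : ℕ) : Prop :=
  isVictory p ∧ winsIn false (2 * n) p ∧ ∀ m < n, ¬ winsIn false (2 * m) p

/-- A trigger of a pattern: an empty square whose filling by PX yields a PX victory. -/
def isTrigger (p : Pattern) (s : Square) : Prop :=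
  s ∈ p.emptySquares ∧ isVictory (p.fill s Cell.px)

/-- A PX attack: a PX pattern, not a victory, with a trigger. -/
def isAttack (p : Pattern) : Prop :=
  p.isPX ∧ ¬ isVictory p ∧ ∃ s, isTrigger p s

/-- An attack of `n` steps: `n` is one plus the steps of the fastest victory
reachable by playing a trigger. -/
def attackSteps (p : Pattern) (n : ℕ) : Prop :=
  isAttack p ∧ 1 ≤ n ∧
  (∃ s, isTrigger p s ∧ victorySteps (p.fill s Cell.px) (n - 1)) ∧
  (∀ s m, isTrigger p s → victorySteps (p.fill s Cell.px) m → n - 1 ≤ m)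

/-- A PX threat: a PX pattern, neither victory nor attack, with an empty square
whose filling by PX yields a PX attack. -/
def isThreat (p : Pattern) : Prop :=
  p.isPX ∧ ¬ isVictory p ∧ ¬ isAttack p ∧
  ∃ s ∈ p.emptySquares, isAttack (p.fill s Cell.px)

/-- A threat of `n` steps: one plus the steps of the fastest reachable attack. -/
def threatSteps (p : Pattern) (n : ℕ) : Prop :=
  isThreat p ∧ 2 ≤ n ∧
  (∃ s ∈ p.emptySquares, attackSteps (p.fill s Cell.px) (n - 1)) ∧
  (∀ s ∈ p.emptySquares, ∀ m, attackSteps (p.fill s Cell.px) m → n - 1 ≤ m)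

/-- `q` is a sub-pattern of `p`. -/
def SubPattern (q p : Pattern) : Prop :=
  q.dom ⊆ p.dom ∧ ∀ s ∈ q.dom, q.val s = p.val s

/-- Two patterns are compatible if they agree on common squares. -/
def Compatible (p q : Pattern) : Prop :=
  ∀ s ∈ p.dom ∩ q.dom, p.val s = q.val s

/-- Union of two (compatible) patterns. -/
def Pattern.union (p q : Pattern) : Pattern :=
  ⟨p.dom ∪ q.dom, fun s => if s ∈ p.dom then p.val s else q.val s⟩

open Classical in
/-- The defence of an attack: the empty squares where PY, moving first in the
restricted game, can play to stop PX from winning. -/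
noncomputable def Defence (p : Pattern) : Finset Square :=
  p.emptySquares.filter (fun s => ¬ pxWinsFirst (p.fill s Cell.py))

/-- A simple five as a relative pattern: exactly one block, all PX stones. -/
def isS5Pattern (q : Pattern) : Prop :=
  ∃ s d, d ∈ dirs ∧ q.dom = blockSquares s d ∧ ∀ t ∈ q.dom, q.val t = Cell.px

/-- A simple four as a relative pattern: one block, four PX stones, one empty. -/
def isS4Pattern (q : Pattern) : Prop :=
  ∃ s d, d ∈ dirs ∧ q.dom = blockSquares s d ∧
    (q.dom.filter (fun t => q.val t = Cell.px)).card = 4 ∧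
    (q.dom.filter (fun t => q.val t = Cell.empty)).card = 1

/-- A simple three as a relative pattern: one block, three PX stones, two empty. -/
def isS3Pattern (q : Pattern) : Prop :=
  ∃ s d, d ∈ dirs ∧ q.dom = blockSquares s d ∧
    (q.dom.filter (fun t => q.val t = Cell.px)).card = 3 ∧
    (q.dom.filter (fun t => q.val t = Cell.empty)).card = 2

/-- A PX block of degree 4 on the board `p`: a block inside `p` with no PY
stones and exactly four PX stones. -/
def isPXBlock4 (p : Pattern) (t d : Square) : Prop :=
  blockSquares t d ⊆ p.dom ∧ (∀ u ∈ blockSquares t d, p.val u ≠ Cell.py) ∧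
  ((blockSquares t d).filter (fun u => p.val u = Cell.px)).card = 4

/-- A simple four for colour `c` on board `p`: a block inside `p` with four
stones of colour `c` and a single empty (trigger) square `g`. -/
def isSimpleFourBlock (p : Pattern) (c : Cell) (t d g : Square) : Prop :=
  d ∈ dirs ∧ blockSquares t d ⊆ p.dom ∧ g ∈ blockSquares t d ∧
  p.val g = Cell.empty ∧ ∀ u ∈ blockSquares t d, u ≠ g → p.val u = c

/-- A simple three for PX on board `p`: a block inside `p` with three PX
stones, two empty squares and no PY stones. -/
def isSimpleThreeBlock (p : Pattern) (t d : Square) : Prop :=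
  d ∈ dirs ∧ blockSquares t d ⊆ p.dom ∧ (∀ u ∈ blockSquares t d, p.val u ≠ Cell.py) ∧
  ((blockSquares t d).filter (fun u => p.val u = Cell.px)).card = 3 ∧
  ((blockSquares t d).filter (fun u => p.val u = Cell.empty)).card = 2

/-- The tracker vector of two blocks `A`, `B`: at each square, the number of
blocks among `A`, `B` in which that square is empty. -/
def tracker (p : Pattern) (A B : Finset Square) (t : Square) : ℕ :=
  (if t ∈ A ∧ p.val t = Cell.empty then 1 else 0) +
  (if t ∈ B ∧ p.val t = Cell.empty then 1 else 0)

/-- The pattern `+XXXX+`: six aligned consecutive squares, four PX stones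
flanked by two empty squares. -/
def d4pat : Pattern :=
  ⟨(Finset.range 6).image (fun i : ℕ => ((i : ℤ), (0 : ℤ))),
   fun s => if s = ((0 : ℤ), (0 : ℤ)) ∨ s = ((5 : ℤ), (0 : ℤ)) then Cell.empty else Cell.px⟩

/-- The pattern `XXXX+`: four aligned consecutive PX stones followed by one
empty square. -/
def s4pat : Pattern :=
  ⟨(Finset.range 5).image (fun i : ℕ => ((i : ℤ), (0 : ℤ))),
   fun s => if s = ((4 : ℤ), (0 : ℤ)) then Cell.empty else Cell.px⟩

lemma card_blockSquares {s d : Square} (hd : d ∈ dirs) : (blockSquares s d).card = 5 := by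
  have hinj : Set.InjOn (fun i => shift s d i) ↑(Finset.range 5) := by
    intro i _ j _ h
    simp only [shift, Prod.ext_iff] at h
    simp only [dirs, List.mem_cons, List.not_mem_nil, or_false] at hd
    rcases hd with rfl | rfl | rfl | rfl <;> simp at h <;> omega
  rw [blockSquares, Finset.card_image_of_injOn hinj, Finset.card_range]

lemma victorySteps_zero_iff {p : Pattern} :
    victorySteps p 0 ↔ p.isPX ∧ hasFive p Cell.px :=
  ⟨fun ⟨⟨hpx, _⟩, h5, _⟩ => ⟨hpx, h5⟩,
   fun ⟨hpx, h5⟩ => ⟨⟨hpx, ⟨0, h5⟩, ⟨0, h5⟩⟩, h5, fun _ hm => absurd hm (Nat.not_lt_zero _)⟩⟩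

lemma Pattern.isPX.erase {p : Pattern} (hp : p.isPX) (s : Square) : (p.erase s).isPX :=
  fun u hu => hp u (Finset.mem_of_mem_erase hu)

lemma hasFive_erase_of_notMem {p : Pattern} {c : Cell} {s t d : Square} (hd : d ∈ dirs)
    (hsub : blockSquares t d ⊆ p.dom) (hval : ∀ u ∈ blockSquares t d, p.val u = c)
    (hs : s ∉ blockSquares t d) : hasFive (p.erase s) c :=
  ⟨t, d, hd, fun _ hu => Finset.mem_erase.mpr ⟨fun h => hs (h ▸ hu), hsub hu⟩, hval⟩

lemma not_hasFive_of_card_lt {p : Pattern} {c : Cell} (h : p.dom.card < 5) : ¬ hasFive p c :=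
  fun ⟨_, _, hd, hsub, _⟩ => (Finset.card_le_card hsub).not_gt (card_blockSquares hd ▸ h)

/-- The simple five is the unique minimal PX victory of 0 steps:
a pattern is a 0-step victory all of whose square-removals destroy the 0-step
victory iff it is a simple five. -/
theorem stmt9 (p : Pattern) :
    (victorySteps p 0 ∧ ∀ s ∈ p.dom, ¬ victorySteps (p.erase s) 0) ↔ isS5Pattern p := by
  simp only [victorySteps_zero_iff]
  constructor
  · rintro ⟨⟨hpx, s, d, hd, hsub, hval⟩, hmin⟩
    have hdom : p.dom = blockSquares s d := by
      refine Finset.Subset.antisymm (fun t ht => ?_) hsub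
      by_contra htb
      exact hmin t ht ⟨hpx.erase t, hasFive_erase_of_notMem hd hsub hval htb⟩
    exact ⟨s, d, hd, hdom, fun t ht => hval t (hdom ▸ ht)⟩
  · rintro ⟨s, d, hd, hdom, hval⟩
    have hpx : p.isPX := fun u hu => by simp [hval u hu]
    refine ⟨⟨hpx, s, d, hd, hdom.ge, fun t ht => hval t (hdom ▸ ht)⟩, fun t ht ⟨_, h5⟩ => ?_⟩
    refine not_hasFive_of_card_lt ?_ h5
    rw [Pattern.erase, Finset.card_erase_of_mem ht, hdom, card_blockSquares hd]
    omega
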